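/- (Normal forms are complete up to their depths.) Let l be one of the logics K, D, T, K4, KD4, S4, K+5, D+5, T+5, K4+5, KD4+5, S4+5, let P be a finite set of propositional variables, and let d ≥ 0. For every normal form ψ ∈ F_P^d and every formula χ ∈ L(P) with md(χ) ≤ d, either ψ→χ is valid for l or ψ→¬χ is valid for l. -/

import Mathlib

/-- Modal formulas in negation normal form, as in the paper:
φ ::= ⊥ | ⊤ | p | ¬p | φ∧φ | φ∨φ | □φ | ◇φ. -/
inductive Form : Type where
  | bot : Form
  | top : Form
  | pos : ℕ → Form
  | npos : ℕ → Form
  | and : Form → Form → Form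
  | or : Form → Form → Form
  | box : Form → Form
  | dia : Form → Form
deriving DecidableEq

namespace Form

/-- Negation, defined as usual (by De Morgan dualities). -/
def neg : Form → Form
  | bot => top
  | top => bot
  | pos p => npos p
  | npos p => pos p
  | and φ ψ => or φ.neg ψ.neg
  | or φ ψ => and φ.neg ψ.neg
  | box φ => dia φ.neg
  | dia φ => box φ.neg

/-- Implication φ → ψ, defined as usual. -/
def imp (φ ψ : Form) : Form := or φ.neg ψ

/-- Bi-implication φ ↔ ψ, defined as usual. -/
def biimp (φ ψ : Form) : Form := and (imp φ ψ) (imp ψ φ)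

/-- P(φ): the set of propositional variables occurring in φ. -/
def vars : Form → Finset ℕ
  | bot => ∅
  | top => ∅
  | pos p => {p}
  | npos p => {p}
  | and φ ψ => φ.vars ∪ ψ.vars
  | or φ ψ => φ.vars ∪ ψ.vars
  | box φ => φ.vars
  | dia φ => φ.vars

/-- Modal depth. -/
def md : Form → ℕ
  | bot => 0
  | top => 0
  | pos _ => 0
  | npos _ => 0
  | and φ ψ => max φ.md ψ.md
  | or φ ψ => max φ.md ψ.md
  | box φ => φ.md + 1
  | dia φ => φ.md + 1

/-- sub(φ): the set of subformulas of φ. -/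
def subf : Form → Finset Form
  | bot => {bot}
  | top => {top}
  | pos p => {pos p}
  | npos p => {npos p}
  | and φ ψ => insert (and φ ψ) (φ.subf ∪ ψ.subf)
  | or φ ψ => insert (or φ ψ) (φ.subf ∪ ψ.subf)
  | box φ => insert (box φ) φ.subf
  | dia φ => insert (dia φ) φ.subf

/-- s̄ub(φ) = sub(φ) ∪ {¬ψ : ψ ∈ sub(φ)}. -/
def subBar (φ : Form) : Finset Form := φ.subf ∪ φ.subf.image neg

/-- □^k φ : k nested boxes. -/
def boxIter : ℕ → Form → Form
  | 0, φ => φ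
  | n + 1, φ => box (boxIter n φ)

def isDia : Form → Bool
  | dia _ => true
  | _ => false

def isBox : Form → Bool
  | box _ => true
  | _ => false

end Form

/-- Big conjunction over a finite set of formulas (⋀∅ = ⊤). -/
noncomputable def bigAnd (s : Finset Form) : Form := s.toList.foldr Form.and Form.top

/-- Big disjunction over a finite set of formulas (⋁∅ = ⊥). -/
noncomputable def bigOr (s : Finset Form) : Form := s.toList.foldr Form.or Form.bot

/-- th(a) = ⋀ a. -/
noncomputable def th (a : Finset Form) : Form := bigAnd a

/-- A finite Kripke model: a nonempty finite set of states, an accessibility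
relation and a valuation. -/
structure Model : Type 1 where
  W : Type
  nonempty : Nonempty W
  finite : Finite W
  R : W → W → Prop
  V : W → Set ℕ

/-- Satisfaction M,w ⊨ φ. -/
def Model.sat (M : Model) : M.W → Form → Prop
  | _, .bot => False
  | _, .top => True
  | w, .pos p => p ∈ M.V w
  | w, .npos p => p ∉ M.V w
  | w, .and φ ψ => M.sat w φ ∧ M.sat w ψ
  | w, .or φ ψ => M.sat w φ ∨ M.sat w ψ
  | w, .box φ => ∀ v, M.R w v → M.sat v φ
  | w, .dia φ => ∃ v, M.R w v ∧ M.sat v φ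

/-- The six base logics K, D, T, K4, KD4, S4. -/
inductive BaseLogic : Type where
  | K | D | T | K4 | KD4 | S4
deriving DecidableEq

/-- A logic: a base logic, possibly extended by axiom 5. -/
structure Logic : Type where
  base : BaseLogic
  has5 : Bool
deriving DecidableEq

def Logic.K : Logic := ⟨.K, false⟩
def Logic.D : Logic := ⟨.D, false⟩
def Logic.T : Logic := ⟨.T, false⟩
def Logic.K4 : Logic := ⟨.K4, false⟩
def Logic.KD4 : Logic := ⟨.KD4, false⟩
def Logic.S4 : Logic := ⟨.S4, false⟩

/-- l + 5. -/
def BaseLogic.plus5 (b : BaseLogic) : Logic := ⟨b, true⟩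

/-- M is a model for the logic l (frame conditions). -/
def Model.IsFor (M : Model) (l : Logic) : Prop :=
  (match l.base with
    | .K => True
    | .D => ∀ w, ∃ v, M.R w v
    | .T => ∀ w, M.R w w
    | .K4 => ∀ a b c, M.R a b → M.R b c → M.R a c
    | .KD4 => (∀ w, ∃ v, M.R w v) ∧ (∀ a b c, M.R a b → M.R b c → M.R a c)
    | .S4 => (∀ w, M.R w w) ∧ (∀ a b c, M.R a b → M.R b c → M.R a c))
  ∧ (l.has5 = true → ∀ a b c, M.R a b → M.R a c → M.R b c)

/-- φ is satisfiable for l: satisfied at some state of some finite model for l. -/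
def Satisfiable (l : Logic) (φ : Form) : Prop :=
  ∃ M : Model, M.IsFor l ∧ ∃ w : M.W, M.sat w φ

/-- φ is valid for l: satisfied at every state of every finite model for l. -/
def Valid (l : Logic) (φ : Form) : Prop :=
  ∀ M : Model, M.IsFor l → ∀ w : M.W, M.sat w φ

/-- φ is complete for l: for every ψ ∈ L(P(φ)), φ→ψ or φ→¬ψ is valid for l. -/
def Complete (l : Logic) (φ : Form) : Prop :=
  ∀ ψ : Form, ψ.vars ⊆ φ.vars → (Valid l (φ.imp ψ) ∨ Valid l (φ.imp ψ.neg))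

/-- Z is a bisimulation modulo P from M to M'. -/
def IsBisim (P : Set ℕ) (M M' : Model) (Z : M.W → M'.W → Prop) : Prop :=
  (∃ s s', Z s s') ∧
  ∀ s s', Z s s' →
    (M.V s ∩ P = M'.V s' ∩ P) ∧
    (∀ t, M.R s t → ∃ t', M'.R s' t' ∧ Z t t') ∧
    (∀ t', M'.R s' t' → ∃ t, M.R s t ∧ Z t t')

/-- (M,a) ∼_P (M',a'). -/
def Bisimilar (P : Set ℕ) (M : Model) (a : M.W) (M' : Model) (a' : M'.W) : Prop :=
  ∃ Z, IsBisim P M M' Z ∧ Z a a'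

/-- (M,a) ≡_P (M',a'): the two pointed models satisfy the same formulas of L(P). -/
def EquivP (P : Set ℕ) (M : Model) (a : M.W) (M' : Model) (a' : M'.W) : Prop :=
  ∀ φ : Form, ↑φ.vars ⊆ P → (M.sat a φ ↔ M'.sat a' φ)

/-- (M,s) is flat (for base logic l, with axiom 5): the carrier is {s}∪W and
R = R1 ∪ R2 with R1 ⊆ {s}×W, R2 an equivalence relation on W, and s ∈ W if
l ∈ {T,S4}. -/
def Flat (l : BaseLogic) (M : Model) (s : M.W) : Prop :=
  ∃ W : Set M.W, (∀ w, w = s ∨ w ∈ W) ∧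
    ∃ R1 R2 : M.W → M.W → Prop,
      (∀ x y, M.R x y ↔ (R1 x y ∨ R2 x y)) ∧
      (∀ x y, R1 x y → x = s ∧ y ∈ W) ∧
      (∀ x y, R2 x y → x ∈ W ∧ y ∈ W) ∧
      (∀ x ∈ W, R2 x x) ∧
      (∀ x y, R2 x y → R2 y x) ∧
      (∀ x y z, R2 x y → R2 y z → R2 x z) ∧
      ((l = .T ∨ l = .S4) → s ∈ W)

/-- A maximal state for l with respect to φ: a maximally l-consistent subset
of s̄ub(φ). -/
def MaxState (l : Logic) (φ : Form) (a : Finset Form) : Prop :=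
  a ⊆ φ.subBar ∧ Satisfiable l (th a) ∧ ∀ ψ ∈ φ.subf, ψ ∈ a ∨ ψ.neg ∈ a

/-- D(x) = {◇ψ : ◇ψ ∈ x}. -/
def DSet (x : Finset Form) : Finset Form := x.filter (fun ψ => ψ.isDia = true)

/-- B(x) = {□ψ : □ψ ∈ x}. -/
def BSet (x : Finset Form) : Finset Form := x.filter (fun ψ => ψ.isBox = true)

/-- A view: a parent-state and a finite set of children-states. -/
structure View : Type where
  parent : Finset Form
  children : Finset (Finset Form)

/-- The view is with respect to φ: all its states are subsets of s̄ub(φ). -/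
def View.WF (φ : Form) (S : View) : Prop :=
  S.parent ⊆ φ.subBar ∧ ∀ c ∈ S.children, c ⊆ φ.subBar

/-- A set of formulas is l-closed. -/
def LClosed (l : Logic) (P : Finset ℕ) (s : Finset Form) : Prop :=
  (∀ φ1 φ2 : Form, Form.and φ1 φ2 ∈ s → φ1 ∈ s ∧ φ2 ∈ s) ∧
  (∀ φ1 φ2 : Form, Form.or φ1 φ2 ∈ s → φ1 ∈ s ∨ φ2 ∈ s) ∧
  ((l.base = .T ∨ l.base = .S4) → ∀ ψ : Form, Form.box ψ ∈ s → ψ ∈ s) ∧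
  (∀ p ∈ P, Form.pos p ∈ s ∨ Form.npos p ∈ s)

/-- The view S is l-complete. -/
def ViewLComplete (l : Logic) (P : Finset ℕ) (S : View) : Prop :=
  LClosed l P S.parent ∧
  (∀ c ∈ S.children, LClosed l P c) ∧
  (∀ ψ : Form, Form.dia ψ ∈ S.parent → ∃ c ∈ S.children, ψ ∈ c) ∧
  (∀ ψ : Form, Form.box ψ ∈ S.parent → ∀ c ∈ S.children, ψ ∈ c) ∧
  ((l.base = .K4 ∨ l.base = .KD4 ∨ l.base = .S4) →
    ∀ ψ : Form, Form.box ψ ∈ S.parent → ∀ c ∈ S.children, Form.box ψ ∈ c) ∧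
  (l.base = .KD4 → S.children.Nonempty)

/-- The view S is consistent for l: every one of its states is consistent. -/
def ViewConsistent (l : Logic) (S : View) : Prop :=
  Satisfiable l (th S.parent) ∧ ∀ c ∈ S.children, Satisfiable l (th c)

/-- d = max{md(th(c')) : c' ∈ C(S)}. -/
noncomputable def childDepth (S : View) : ℕ := S.children.sup (fun c => (th c).md)

/-- A K-maximal child-state: a maximally K-consistent subset of s̄ub_d(φ). -/
def KMaxChild (φ : Form) (d : ℕ) (c : Finset Form) : Prop :=
  c ⊆ φ.subBar.filter (fun ψ => ψ.md ≤ d) ∧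
  Satisfiable Logic.K (th c) ∧
  ∀ ψ ∈ φ.subf, ψ.md ≤ d → (ψ ∈ c ∨ ψ.neg ∈ c)

/-- S' completes S (for logic l, with respect to φ). -/
def ViewCompletes (l : Logic) (φ : Form) (S' S : View) : Prop :=
  ViewLComplete l φ.vars S' ∧
  S.parent ⊆ S'.parent ∧
  (∀ a ∈ S.children, ∃ a' ∈ S'.children, a ⊆ a') ∧
  (l.base = .K → ∀ a' ∈ S'.children, KMaxChild φ (childDepth S') a') ∧
  (l.base ≠ .K → ∀ a' ∈ S'.children, MaxState l φ a')

/-- The depth-0 normal form ⋀_{p∈S} p ∧ ⋀_{p∈P∖S} ¬p. -/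
noncomputable def nf0 (P S : Finset ℕ) : Form :=
  Form.and (bigAnd (S.image Form.pos)) (bigAnd ((P \ S).image Form.npos))

/-- Fine's normal forms F_P^d. -/
noncomputable def NF (P : Finset ℕ) : ℕ → Set Form
  | 0 => { χ | ∃ S ⊆ P, χ = nf0 P S }
  | d + 1 => { χ | ∃ S : Finset Form, ↑S ⊆ NF P d ∧ ∃ S0 ⊆ P,
      χ = Form.and (nf0 P S0)
            (Form.and (bigAnd (S.image Form.dia)) (Form.box (bigOr S))) }

/-- φ is complete up to its depth for l. -/
def CompleteUpToDepth (l : Logic) (φ : Form) : Prop :=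
  ∀ ψ : Form, ψ.vars ⊆ φ.vars → ψ.md ≤ φ.md →
    (Valid l (φ.imp ψ) ∨ Valid l (φ.imp ψ.neg))

/-! Two worlds satisfying the same normal form ψ ∈ F_P^d agree on every formula of L(P) of depth
at most d: the conjunct in F_P^0 fixes the atoms, and the conjuncts ◇φ and □⋁S match every
successor of one world with a successor of the other satisfying the same φ ∈ F_P^(d-1), so
induction on d applies. Hence χ has the same truth value at every world of every Kripke model
where ψ holds. -/

namespace Model

variable (M : Model) (w : M.W)

lemma sat_neg (φ : Form) : M.sat w φ.neg ↔ ¬ M.sat w φ := by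
  induction φ generalizing w with
  | and a b iha ihb => simp only [Form.neg, Model.sat, iha, ihb]; tauto
  | or a b iha ihb => simp only [Form.neg, Model.sat, iha, ihb]; tauto
  | box a ih => simp [Form.neg, Model.sat, ih]
  | dia a ih => simp [Form.neg, Model.sat, ih]
  | _ => simp [Form.neg, Model.sat]

lemma sat_imp (φ ψ : Form) : M.sat w (φ.imp ψ) ↔ (M.sat w φ → M.sat w ψ) := by
  rw [Form.imp, Model.sat, sat_neg, imp_iff_not_or]

lemma sat_bigAnd (s : Finset Form) : M.sat w (bigAnd s) ↔ ∀ φ ∈ s, M.sat w φ := by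
  simp only [bigAnd, ← Finset.mem_toList]
  induction s.toList with
  | nil => simp [Model.sat]
  | cons a t ih => simp [Model.sat, ih]

lemma sat_bigOr (s : Finset Form) : M.sat w (bigOr s) ↔ ∃ φ ∈ s, M.sat w φ := by
  simp only [bigOr, ← Finset.mem_toList]
  induction s.toList with
  | nil => simp [Model.sat]
  | cons a t ih => simp [Model.sat, ih]

lemma mem_V_iff_of_sat_nf0 {P S : Finset ℕ} (h : M.sat w (nf0 P S)) :
    ∀ p ∈ P, p ∈ M.V w ↔ p ∈ S := by
  obtain ⟨hpos, hneg⟩ := h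
  rw [sat_bigAnd] at hpos hneg
  intro p hp
  refine ⟨fun hV => ?_, fun hS => hpos _ (Finset.mem_image_of_mem _ hS)⟩
  by_contra hS
  exact hneg _ (Finset.mem_image_of_mem _ (Finset.mem_sdiff.mpr ⟨hp, hS⟩)) hV

end Model

def EquivUpTo (P : Finset ℕ) (d : ℕ) (M : Model) (w : M.W) (M' : Model) (w' : M'.W) : Prop :=
  ∀ χ : Form, χ.vars ⊆ P → χ.md ≤ d → (M.sat w χ ↔ M'.sat w' χ)

namespace EquivUpTo

variable {P : Finset ℕ} {d : ℕ} {M M' : Model} {w : M.W} {w' : M'.W}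

lemma of_atoms_of_modal (hatoms : ∀ p ∈ P, p ∈ M.V w ↔ p ∈ M'.V w')
    (hbox : ∀ a : Form, a.vars ⊆ P → a.md < d → (M.sat w a.box ↔ M'.sat w' a.box))
    (hdia : ∀ a : Form, a.vars ⊆ P → a.md < d → (M.sat w a.dia ↔ M'.sat w' a.dia)) :
    EquivUpTo P d M w M' w' := by
  intro χ hv hd
  induction χ with
  | bot | top => rfl
  | pos p => exact hatoms p (hv (by simp [Form.vars]))
  | npos p => exact not_congr (hatoms p (hv (by simp [Form.vars])))
  | and a b iha ihb =>
    simp only [Form.vars, Finset.union_subset_iff, Form.md, max_le_iff] at hv hd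
    exact and_congr (iha hv.1 hd.1) (ihb hv.2 hd.2)
  | or a b iha ihb =>
    simp only [Form.vars, Finset.union_subset_iff, Form.md, max_le_iff] at hv hd
    exact or_congr (iha hv.1 hd.1) (ihb hv.2 hd.2)
  | box a => exact hbox a hv hd
  | dia a => exact hdia a hv hd

lemma succ_of_forth_back (hatoms : ∀ p ∈ P, p ∈ M.V w ↔ p ∈ M'.V w')
    (forth : ∀ v, M.R w v → ∃ v', M'.R w' v' ∧ EquivUpTo P d M v M' v')
    (back : ∀ v', M'.R w' v' → ∃ v, M.R w v ∧ EquivUpTo P d M v M' v') :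
    EquivUpTo P (d + 1) M w M' w' := by
  refine of_atoms_of_modal hatoms (fun a hv hd => ⟨fun h v' hv' => ?_, fun h v hv => ?_⟩)
    (fun a hv hd => ⟨fun ⟨v, hv, ha⟩ => ?_, fun ⟨v', hv', ha⟩ => ?_⟩)
  all_goals rw [Nat.lt_succ_iff] at hd
  · obtain ⟨v, hv, hE⟩ := back v' hv'
    exact (hE a ‹_› hd).mp (h v hv)
  · obtain ⟨v', hv', hE⟩ := forth v hv
    exact (hE a ‹_› hd).mpr (h v' hv')
  · obtain ⟨v', hv', hE⟩ := forth v hv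
    exact ⟨v', hv', (hE a ‹_› hd).mp ha⟩
  · obtain ⟨v, hv, hE⟩ := back v' hv'
    exact ⟨v, hv, (hE a ‹_› hd).mpr ha⟩

end EquivUpTo

lemma exists_succ_sat_of_sat_nf_succ {P S0 : Finset ℕ} {S : Finset Form} {M M' : Model}
    {w : M.W} {w' : M'.W}
    (h : M.sat w (Form.and (nf0 P S0) (Form.and (bigAnd (S.image Form.dia)) (Form.box (bigOr S)))))
    (h' : M'.sat w' (Form.and (nf0 P S0) (Form.and (bigAnd (S.image Form.dia)) (Form.box (bigOr S)))))
    {v : M.W} (hv : M.R w v) :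
    ∃ φ ∈ S, M.sat v φ ∧ ∃ v', M'.R w' v' ∧ M'.sat v' φ := by
  obtain ⟨φ, hφ, hvφ⟩ := (M.sat_bigOr v S).mp (h.2.2 v hv)
  exact ⟨φ, hφ, hvφ, (M'.sat_bigAnd w' _).mp h'.2.1 _ (Finset.mem_image_of_mem _ hφ)⟩

lemma equivUpTo_of_sat_nf {P : Finset ℕ} {d : ℕ} {ψ : Form} (hψ : ψ ∈ NF P d)
    {M M' : Model} {w : M.W} {w' : M'.W} (h : M.sat w ψ) (h' : M'.sat w' ψ) :
    EquivUpTo P d M w M' w' := by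
  induction d generalizing ψ M M' w w' with
  | zero =>
    obtain ⟨S, -, rfl⟩ := hψ
    refine EquivUpTo.of_atoms_of_modal (fun p hp => ?_) (by simp) (by simp)
    exact (M.mem_V_iff_of_sat_nf0 w h p hp).trans (M'.mem_V_iff_of_sat_nf0 w' h' p hp).symm
  | succ d ih =>
    obtain ⟨S, hS, S0, -, rfl⟩ := hψ
    refine EquivUpTo.succ_of_forth_back (fun p hp => ?_) (fun v hv => ?_) (fun v' hv' => ?_)
    · exact (M.mem_V_iff_of_sat_nf0 w h.1 p hp).trans (M'.mem_V_iff_of_sat_nf0 w' h'.1 p hp).symm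
    · obtain ⟨φ, hφ, hvφ, v', hv', hv'φ⟩ := exists_succ_sat_of_sat_nf_succ h h' hv
      exact ⟨v', hv', ih (hS hφ) hvφ hv'φ⟩
    · obtain ⟨φ, hφ, hv'φ, v, hv, hvφ⟩ := exists_succ_sat_of_sat_nf_succ h' h hv'
      exact ⟨v, hv, ih (hS hφ) hvφ hv'φ⟩

/-- normal forms are complete up to their depths, for every
logic l among the twelve considered. -/
theorem stmt17 (l : Logic) (P : Finset ℕ) (d : ℕ)
    (ψ : Form) (hψ : ψ ∈ NF P d)
    (χ : Form) (hv : χ.vars ⊆ P) (hd : χ.md ≤ d) :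
    Valid l (ψ.imp χ) ∨ Valid l (ψ.imp χ.neg) := by
  by_cases hwit : ∃ (M₀ : Model) (w₀ : M₀.W), M₀.sat w₀ ψ ∧ M₀.sat w₀ χ
  · obtain ⟨M₀, w₀, hψ₀, hχ₀⟩ := hwit
    refine Or.inl fun M _ w => (M.sat_imp w ψ χ).mpr fun hψw => ?_
    exact (equivUpTo_of_sat_nf hψ hψ₀ hψw χ hv hd).mp hχ₀
  · refine Or.inr fun M _ w => (M.sat_imp w ψ χ.neg).mpr fun hψw => ?_
    exact (M.sat_neg w χ).mpr fun hχw => hwit ⟨M, w, hψw, hχw⟩
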